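/- Null sets are polar for (NA1) measures: Let A ∈ F^qv be a null set (P̄(A) = 0) and let P be a probability measure on (Ω^qv, F^qv) under which the coordinate process B satisfies (NA1), i.e. lim_{n→∞} sup_{H ∈ H₁} P(1 + liminf_{t→∞}(H·B)_t ≥ n) = 0. Then P(A) = 0. -/

import Mathlib

open MeasureTheory ProbabilityTheory Filter Topology Set
open scoped ENNReal NNReal Classical

noncomputable section

/-- The space of continuous paths on `[0,∞)` started at `0`, modeled as continuous
functions on `ℝ` which vanish on `(-∞,0]`, endowed with the topology of locally
uniform convergence and its Borel σ-algebra. -/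
def PathSpace : Type := {ω : ℝ → ℝ // Continuous ω ∧ ∀ t ≤ 0, ω t = 0}

instance : TopologicalSpace PathSpace :=
  TopologicalSpace.induced (fun ω : PathSpace => (⟨ω.1, ω.2.1⟩ : C(ℝ, ℝ))) inferInstance

instance : MeasurableSpace PathSpace := borel PathSpace
instance : BorelSpace PathSpace := ⟨rfl⟩

namespace RF

/-- The coordinate (canonical) process. -/
def eval (t : ℝ) (ω : PathSpace) : ℝ := ω.1 t

/-- The natural (raw) filtration generated by the coordinate process. -/
def natFilt (t : ℝ) : MeasurableSpace PathSpace :=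
  ⨆ (s : ℝ) (_ : s ≤ t), MeasurableSpace.comap (eval s) inferInstance

/-- The path `ω` stopped at time `t`. -/
def stoppedPath (ω : PathSpace) (t : ℝ) : PathSpace :=
  ⟨fun s => ω.1 (min s t), ω.2.1.comp (continuous_id.min continuous_const),
    fun s hs => ω.2.2 _ (le_trans (min_le_left _ _) hs)⟩

/-- Concatenation: follow `ω` up to time `t`, then continue with the increments of `ω'`. -/
def concat (ω : PathSpace) (t : ℝ) (ω' : PathSpace) : PathSpace :=
  ⟨fun r => if r ≤ max t 0 then ω.1 r else ω.1 (max t 0) + ω'.1 (r - max t 0), by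
    constructor
    · refine Continuous.if_le ω.2.1 ?_ continuous_id continuous_const ?_
      · exact continuous_const.add (ω'.2.1.comp (continuous_id.sub continuous_const))
      · intro x hx; rw [hx, sub_self, ω'.2.2 0 le_rfl, add_zero]
    · intro r hr
      have h1 : r ≤ max t 0 := le_trans hr (le_max_right t 0)
      simp only [h1, if_true]
      exact ω.2.2 r hr⟩

/-- The "concatenation version" of the conditional expectation
`E_W[X | F_t](ω) = ∫ X((ω↾[0,t]) ⊕ ω') W(dω')`. -/
def condExpW (W : Measure PathSpace) (X : PathSpace → ℝ) (t : ℝ) (ω : PathSpace) : ℝ :=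
  ∫ ω', X (concat ω t ω') ∂W

/-- `W` is the Wiener measure: a probability measure under which the coordinate process
has independent centered Gaussian increments. -/
def IsWienerMeasure (W : Measure PathSpace) : Prop :=
  IsProbabilityMeasure W ∧
  (∀ s t : ℝ, 0 ≤ s → s ≤ t →
    Measure.map (fun ω => eval t ω - eval s ω) W = gaussianReal 0 ((t - s).toNNReal)) ∧
  (∀ (n : ℕ) (ts : ℕ → ℝ), (∀ i, 0 ≤ ts i) → Monotone ts →
    iIndepFun
      (fun i : Fin n => fun ω => eval (ts (i.1 + 1)) ω - eval (ts i.1) ω) W)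

/-- A simple trading strategy on the (infinite horizon) path space: a sequence of
strictly increasing stopping times `τ 0 = 0 < τ 1 < ⋯ → ∞` of the natural filtration
together with bounded position functions `F n` which depend on the path stopped at `τ n`. -/
structure SimpleStrategy where
  τ : ℕ → PathSpace → ℝ
  F : ℕ → PathSpace → ℝ
  tau_zero : ∀ ω, τ 0 ω = 0
  tau_lt : ∀ n ω, τ n ω < τ (n + 1) ω
  tau_tendsto : ∀ ω, Tendsto (fun n => τ n ω) atTop atTop
  tau_stopping : ∀ n t, MeasurableSet[natFilt t] {ω | τ n ω ≤ t}
  F_meas : ∀ n, @Measurable _ _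
    (MeasurableSpace.comap (fun ω => stoppedPath ω (τ n ω)) inferInstance) _ (F n)
  F_bdd : ∀ n, ∃ C, ∀ ω, |F n ω| ≤ C

/-- The capital process `(H ⬝ B)_t` of a simple strategy. -/
def capital (H : SimpleStrategy) (t : ℝ) (ω : PathSpace) : ℝ :=
  ∑' n, H.F n ω * (ω.1 (min (H.τ (n + 1) ω) t) - ω.1 (min (H.τ n ω) t))

/-- A simple trading strategy on the finite horizon `[0,T]`: the stopping times increase
to the terminal time `T`. -/
structure SimpleStrategyOn (T : ℝ) where
  τ : ℕ → PathSpace → ℝ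
  F : ℕ → PathSpace → ℝ
  tau_zero : ∀ ω, τ 0 ω = 0
  tau_lt : ∀ n ω, τ n ω < τ (n + 1) ω
  tau_tendsto : ∀ ω, Tendsto (fun n => τ n ω) atTop (𝓝 T)
  tau_stopping : ∀ n t, MeasurableSet[natFilt t] {ω | τ n ω ≤ t}
  F_meas : ∀ n, @Measurable _ _
    (MeasurableSpace.comap (fun ω => stoppedPath ω (τ n ω)) inferInstance) _ (F n)
  F_bdd : ∀ n, ∃ C, ∀ ω, |F n ω| ≤ C

/-- The capital process of a finite-horizon simple strategy. -/
def capitalOn {T : ℝ} (H : SimpleStrategyOn T) (t : ℝ) (ω : PathSpace) : ℝ :=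
  ∑' n, H.F n ω * (ω.1 (min (H.τ (n + 1) ω) t) - ω.1 (min (H.τ n ω) t))

/-- `x` lies on the dyadic grid `2^{-n} ℤ`. -/
def inDyadic (n : ℕ) (x : ℝ) : Prop := ∃ z : ℤ, x = (z : ℝ) * (2 : ℝ) ^ (-(n : ℤ))

/-- The stopping times `σ^n_k` of successive moves of `ω` across the dyadic grid `2^{-n}ℤ`
(with values in `[0,∞]`). -/
def sigmaTimes (ω : ℝ → ℝ) (n : ℕ) : ℕ → ℝ≥0∞
  | 0 => 0
  | k + 1 =>
    sInf (ENNReal.ofReal '' {u : ℝ | 0 ≤ u ∧ sigmaTimes ω n k ≤ ENNReal.ofReal u ∧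
      inDyadic n (ω u) ∧ ω u ≠ ω (sigmaTimes ω n k).toReal})

/-- The discrete quadratic variation `V^n_t(ω)` along the dyadic stopping times. -/
def discreteQV (ω : ℝ → ℝ) (n : ℕ) (t : ℝ) : ℝ :=
  ∑' k : ℕ, (ω (min (sigmaTimes ω n (k + 1)) (ENNReal.ofReal t)).toReal
      - ω (min (sigmaTimes ω n k) (ENNReal.ofReal t)).toReal) ^ 2

/-- `f` and `g` have the same intervals of constancy (on `[0,∞)`). -/
def SameConstancy (f g : ℝ → ℝ) : Prop :=
  ∀ u v : ℝ, 0 ≤ u → u ≤ v →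
    ((∀ x ∈ Icc u v, f x = f u) ↔ ∀ x ∈ Icc u v, g x = g u)

/-- `A` is the quadratic variation of `ω`: the discrete quadratic variations converge
locally uniformly to the continuous function `A`, which has the same intervals of
constancy as `ω`; moreover either `ω` converges at `∞` or `A` is unbounded. -/
def IsQVLimit (ω : ℝ → ℝ) (A : ℝ → ℝ) : Prop :=
  Continuous A ∧ TendstoLocallyUniformly (fun n => discreteQV ω n) A atTop ∧
  SameConstancy A ω ∧
  ((∃ L, Tendsto ω atTop (𝓝 L)) ∨ ¬ BddAbove (A '' Ici 0))

/-- `ω` admits a quadratic variation in the sense of Vovk. -/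
def IsQVPath (ω : PathSpace) : Prop := ∃ A, IsQVLimit ω.1 A

/-- `Ω^qv`, the set of paths admitting a quadratic variation. -/
def OmegaQV : Set PathSpace := {ω | IsQVPath ω}

/-- The quadratic variation `⟨ω⟩` of a path (junk value `0` off `Ω^qv`). -/
def qvOf (ω : PathSpace) : ℝ → ℝ :=
  if h : IsQVPath ω then h.choose else fun _ => 0

/-- `⟨ω⟩` as a Stieltjes function (junk value off the set where `⟨ω⟩` is monotone
and continuous). -/
def qvStieltjes (ω : PathSpace) : StieltjesFunction ℝ :=
  if h : Monotone (qvOf ω) ∧ Continuous (qvOf ω) then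
    { toFun := qvOf ω
      mono' := h.1
      right_continuous' := fun _ => h.2.continuousAt.continuousWithinAt }
  else
    { toFun := fun _ => 0
      mono' := monotone_const
      right_continuous' := fun _ => continuousWithinAt_const }

/-- `ζ^f_t(ω) = (1/2) ∫_0^t f''(ω_s) d⟨ω⟩_s`, the compensator of `f(ω)` in terms of the
pathwise quadratic variation. -/
def zetaQV (f : ℝ → ℝ) (ω : PathSpace) (t : ℝ) : ℝ :=
  (1 / 2) * ∫ s in Ioc (0 : ℝ) t, deriv (deriv f) (ω.1 s) ∂(qvStieltjes ω).measure

/-- `ζ^f_t(ω) = (1/2) ∫_0^t f''(ω_s) ds` (compensator under Wiener measure). -/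
def zetaLeb (f : ℝ → ℝ) (ω : PathSpace) (t : ℝ) : ℝ :=
  (1 / 2) * ∫ s in (0 : ℝ)..t, deriv (deriv f) (ω.1 s)

/-- `τ_t(ω) = inf{s ≥ 0 : ⟨ω⟩_s > t}` as a set. -/
def nttSet (ω : PathSpace) (t : ℝ) : Set ℝ := {s : ℝ | 0 ≤ s ∧ t < qvOf ω s}

/-- The normalizing time transformation `ntt(ω)_t = ω(τ_t(ω))`, with
`ω(∞) := lim_{s→∞} ω(s)` when `⟨ω⟩` is bounded. -/
def ntt (ω : PathSpace) (t : ℝ) : ℝ :=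
  if (nttSet ω t).Nonempty then ω.1 (sInf (nttSet ω t)) else limUnder atTop ω.1

/-- The normalizing time transformation as a map of the path space
(junk value for paths where `ntt ω` is not a continuous path). -/
def nttPath (ω : PathSpace) : PathSpace :=
  if h : Continuous (ntt ω) ∧ ∀ t ≤ 0, ntt ω t = 0 then ⟨ntt ω, h⟩
  else ⟨fun _ => 0, continuous_const, fun _ _ => rfl⟩

/-- `⟨ω⟩_∞ = ∞`, i.e. the quadratic variation is unbounded. -/
def QVUnbounded (ω : PathSpace) : Prop := ¬ BddAbove (qvOf ω '' Ici 0)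

/-- Vovk-type super-hedging outer expectation (with the modification of
Perkowski–Prömel): the minimal initial capital `λ > 0` such that some sequence of
`λ`-admissible simple strategies super-hedges `X` on `Ω^qv` in the sense of iterated
inferior limits. -/
def Ebar (X : PathSpace → EReal) : ℝ≥0∞ :=
  sInf {l : ℝ≥0∞ | ∃ lam : ℝ, 0 < lam ∧ l = ENNReal.ofReal lam ∧
    ∃ H : ℕ → SimpleStrategy,
      (∀ n (ω : PathSpace) (t : ℝ), ω ∈ OmegaQV → 0 ≤ t → -lam ≤ capital (H n) t ω) ∧
      ∀ ω ∈ OmegaQV, X ω ≤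
        liminf (fun t : ℝ =>
          liminf (fun n : ℕ => ((lam + capital (H n) t ω : ℝ) : EReal)) atTop) atTop}

/-- The outer measure `P̄`. -/
def Pbar (A : Set PathSpace) : ℝ≥0∞ := Ebar (A.indicator fun _ => (1 : EReal))

/-- Vovk's outer measure `Q̄`, defined through countable convex combinations of
admissible simple strategies. -/
def Qbar (A : Set PathSpace) : ℝ≥0∞ :=
  sInf {l : ℝ≥0∞ | ∃ lam : ℝ, 0 < lam ∧ l = ENNReal.ofReal lam ∧
    ∃ (lams : ℕ → ℝ) (H : ℕ → SimpleStrategy),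
      (∀ k, 0 < lams k) ∧ HasSum lams lam ∧
      (∀ k (ω : PathSpace) (t : ℝ), ω ∈ OmegaQV → 0 ≤ t → -(lams k) ≤ capital (H k) t ω) ∧
      ∀ ω ∈ OmegaQV,
        (A.indicator (fun _ => (1 : ℝ≥0∞)) ω) ≤
          liminf (fun t : ℝ => ∑' k, ENNReal.ofReal (lams k + capital (H k) t ω)) atTop}

/-- `C_qv[0,T]`: quadratic-variation paths on `[0,T]` (modeled as paths in `Ω^qv`
which are constant after time `T`). -/
def CQV (T : ℝ) : Set PathSpace := {ω | IsQVPath ω ∧ ∀ t, T ≤ t → ω.1 t = ω.1 T}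

/-- A martingale measure on `C_qv[0,T]`: a probability measure concentrated on
`C_qv[0,T]` under which the coordinate process is a martingale on `[0,T]` for the
natural filtration. -/
def IsMartingaleMeasureOn (T : ℝ) (P : Measure PathSpace) : Prop :=
  IsProbabilityMeasure P ∧ P (CQV T) = 1 ∧
  (∀ t, 0 ≤ t → t ≤ T → Integrable (eval t) P) ∧
  ∀ s t, 0 ≤ s → s ≤ t → t ≤ T → P[eval t | natFilt s] =ᵐ[P] eval s

/-- The (possibly infinite) expectation `E_P[f] ∈ [-∞,∞]` of a real functional. -/
def expE {Ω : Type*} [MeasurableSpace Ω] (P : Measure Ω) (f : Ω → ℝ) : EReal :=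
  ((∫⁻ ω, ENNReal.ofReal (f ω) ∂P : ℝ≥0∞) : EReal)
    - ((∫⁻ ω, ENNReal.ofReal (-(f ω)) ∂P : ℝ≥0∞) : EReal)

/-- The space `Υ` of stopped paths `(f,s)`, realized as pairs with `f` continuous,
constant on `(-∞,0]` and constant on `[s,∞)`. -/
def Upsilon : Set ((ℝ → ℝ) × ℝ) :=
  {p | Continuous p.1 ∧ 0 ≤ p.2 ∧ (∀ t ≤ 0, p.1 t = p.1 0) ∧
    ∀ t, p.2 ≤ t → p.1 t = p.1 p.2}

/-- The distance on stopped paths, assuming `s ≤ t`. -/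
def dUpAux (f : ℝ → ℝ) (s : ℝ) (g : ℝ → ℝ) (t : ℝ) : ℝ :=
  max (t - s) (max (⨆ u : Icc (0 : ℝ) s, |f u - g u|) (⨆ u : Icc s t, |g u - f s|))

/-- The metric `d_Υ` on the space of stopped paths. -/
def dUp (p q : (ℝ → ℝ) × ℝ) : ℝ :=
  if p.2 ≤ q.2 then dUpAux p.1 p.2 q.1 q.2 else dUpAux q.1 q.2 p.1 p.2

/-- The stopped path `(f(· ∧ s), s) ∈ Υ` (with clamping making it canonical). -/
def stoppedAtFun (f : ℝ → ℝ) (s : ℝ) : (ℝ → ℝ) × ℝ :=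
  (fun u => f (min (max u 0) (max s 0)), max s 0)

/-- `γ` is upper semicontinuous on `Υ` with respect to `d_Υ`. -/
def USCUpsilon (γ : (ℝ → ℝ) × ℝ → ℝ) : Prop :=
  ∀ p ∈ Upsilon, ∀ ε : ℝ, 0 < ε → ∃ δ : ℝ, 0 < δ ∧
    ∀ q ∈ Upsilon, dUp p q < δ → γ q < γ p + ε

/-- `τ` is a stopping time of the natural filtration. -/
def IsStoppingTimeN (τ : PathSpace → ℝ) : Prop :=
  ∀ t, MeasurableSet[natFilt t] {ω | τ ω ≤ t}

end RF
namespace RF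

/-- `(NA1)`: no arbitrage opportunities of the first kind, formulated through the
boundedness in probability of the outcomes of `1`-admissible simple strategies. -/
def SatisfiesNA1 (P : Measure PathSpace) : Prop :=
  Tendsto (fun n : ℕ =>
      ⨆ H : {H : SimpleStrategy //
          ∀ (ω : PathSpace) (t : ℝ), ω ∈ OmegaQV → 0 ≤ t → -1 ≤ capital H t ω},
        P {ω | (n : EReal) ≤
            1 + liminf (fun t : ℝ => ((capital H.1 t ω : ℝ) : EReal)) atTop})
    atTop (𝓝 0)


/-! ### Auxiliary machinery for the proof of `null_polar_NA1` -/

lemma tau_strictMono (H : SimpleStrategy) (ω : PathSpace) : StrictMono fun j => H.τ j ω :=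
  strictMono_nat_of_lt_succ fun n => H.tau_lt n ω

lemma natFilt_mono {s t : ℝ} (h : s ≤ t) : natFilt s ≤ natFilt t := by
  refine iSup₂_le fun u hu => ?_
  exact le_iSup₂ (f := fun (u : ℝ) (_ : u ≤ t) => MeasurableSpace.comap (eval u) inferInstance)
    u (hu.trans h)

lemma measurable_evalRF (s : ℝ) : Measurable (eval s) := by
  have h1 : Continuous fun ω : PathSpace => (⟨ω.1, ω.2.1⟩ : C(ℝ, ℝ)) := continuous_induced_dom
  exact ((continuous_eval_const s).comp h1).measurable

lemma natFilt_le_borel (t : ℝ) : natFilt t ≤ (inferInstance : MeasurableSpace PathSpace) :=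
  iSup₂_le fun s _ => measurable_iff_comap_le.mp (measurable_evalRF s)

lemma measurableSet_of_natFilt {t : ℝ} {s : Set PathSpace} (h : MeasurableSet[natFilt t] s) :
    MeasurableSet s := natFilt_le_borel t s h

lemma natFilt_invariant {t : ℝ} {M : Set PathSpace} (hM : MeasurableSet[natFilt t] M)
    {ω ω' : PathSpace} (h : ∀ s ≤ t, ω.1 s = ω'.1 s) : ω ∈ M ↔ ω' ∈ M := by
  let m : MeasurableSpace PathSpace :=
    { MeasurableSet' := fun M =>
        ∀ ω ω' : PathSpace, (∀ s ≤ t, ω.1 s = ω'.1 s) → (ω ∈ M ↔ ω' ∈ M)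
      measurableSet_empty := fun _ _ _ => Iff.rfl
      measurableSet_compl := fun M hM ω ω' hh => not_congr (hM ω ω' hh)
      measurableSet_iUnion := fun f hf ω ω' hh => by
        simp only [Set.mem_iUnion]
        exact exists_congr fun i => hf i ω ω' hh }
  have hle : natFilt t ≤ m := by
    refine iSup₂_le fun u hu => ?_
    intro M hM
    obtain ⟨B, -, rfl⟩ := MeasurableSpace.measurableSet_comap.mp hM
    intro ω ω' hh
    simp only [Set.mem_preimage]
    rw [show eval u ω = eval u ω' from hh u hu]
  exact hle M hM ω ω' h

lemma exStop (H : SimpleStrategy) (T : ℝ) (ω : PathSpace) : ∃ j, T ≤ H.τ j ω :=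
  ((H.tau_tendsto ω).eventually_ge_atTop T).exists

/-- Index of the first stopping time which is `≥ T`. -/
def nStop (H : SimpleStrategy) (T : ℝ) (ω : PathSpace) : ℕ := Nat.find (exStop H T ω)

/-- The stopping times of the strategy `H` stopped at the deterministic time `T`. -/
def tauStop (H : SimpleStrategy) (T : ℝ) (j : ℕ) (ω : PathSpace) : ℝ :=
  if H.τ j ω < T then H.τ j ω else T + ((j - nStop H T ω : ℕ) : ℝ)

/-- The positions of the strategy `H` stopped at the deterministic time `T`. -/
def FStop (H : SimpleStrategy) (T : ℝ) (j : ℕ) (ω : PathSpace) : ℝ :=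
  if H.τ j ω < T then H.F j ω else 0

lemma nStop_le_iff {H : SimpleStrategy} {T : ℝ} {ω : PathSpace} {j : ℕ} :
    nStop H T ω ≤ j ↔ T ≤ H.τ j ω := by
  constructor
  · intro h
    exact le_trans (Nat.find_spec (exStop H T ω)) ((tau_strictMono H ω).monotone h)
  · intro h; exact Nat.find_le h

lemma tau_lt_T_iff {H : SimpleStrategy} {T : ℝ} {ω : PathSpace} {j : ℕ} :
    H.τ j ω < T ↔ j < nStop H T ω := by
  rw [← not_le, ← not_le]
  exact not_congr nStop_le_iff.symm

lemma tauStop_eq_of_lt {H : SimpleStrategy} {T : ℝ} {j : ℕ} {ω : PathSpace}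
    (h : H.τ j ω < T) : tauStop H T j ω = H.τ j ω := if_pos h

lemma tauStop_eq_of_ge {H : SimpleStrategy} {T : ℝ} {j : ℕ} {ω : PathSpace}
    (h : T ≤ H.τ j ω) : tauStop H T j ω = T + ((j - nStop H T ω : ℕ) : ℝ) :=
  if_neg (not_lt.mpr h)

lemma le_tauStop_of_ge {H : SimpleStrategy} {T : ℝ} {j : ℕ} {ω : PathSpace}
    (h : T ≤ H.τ j ω) : T ≤ tauStop H T j ω := by
  rw [tauStop_eq_of_ge h]; exact le_add_of_nonneg_right (Nat.cast_nonneg _)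

lemma tauStop_succ_eq_T {H : SimpleStrategy} {T : ℝ} {j : ℕ} {ω : PathSpace}
    (h1 : H.τ j ω < T) (h2 : T ≤ H.τ (j+1) ω) : tauStop H T (j+1) ω = T := by
  have hn : nStop H T ω = j + 1 :=
    le_antisymm (nStop_le_iff.mpr h2) (tau_lt_T_iff.mp h1)
  rw [tauStop_eq_of_ge h2, hn]
  simp

lemma FStop_of_lt {H : SimpleStrategy} {T : ℝ} {j : ℕ} {ω : PathSpace}
    (h : H.τ j ω < T) : FStop H T j ω = H.F j ω := if_pos h

lemma FStop_of_ge {H : SimpleStrategy} {T : ℝ} {j : ℕ} {ω : PathSpace}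
    (h : T ≤ H.τ j ω) : FStop H T j ω = 0 := if_neg (not_lt.mpr h)

lemma measurableSet_tau_lt (H : SimpleStrategy) (j : ℕ) {T t : ℝ} (hT : T ≤ t) :
    MeasurableSet[natFilt t] {ω | H.τ j ω < T} := by
  have hset : {ω : PathSpace | H.τ j ω < T} =
      ⋃ m : ℕ, {ω | H.τ j ω ≤ T - 1 / ((m : ℝ) + 1)} := by
    ext ω
    simp only [Set.mem_setOf_eq, Set.mem_iUnion]
    constructor
    · intro h
      obtain ⟨m, hm⟩ := exists_nat_one_div_lt (sub_pos.mpr h)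
      exact ⟨m, by linarith⟩
    · rintro ⟨m, hm⟩
      have hpos : (0:ℝ) < 1 / ((m : ℝ) + 1) := by positivity
      linarith
  rw [hset]
  refine MeasurableSet.iUnion fun m => ?_
  have hpos : (0:ℝ) < 1 / ((m : ℝ) + 1) := by positivity
  exact natFilt_mono (by linarith) _ (H.tau_stopping j _)

lemma measurableSet_nStop_eq (H : SimpleStrategy) {T t : ℝ} (hT : T ≤ t) (i : ℕ) :
    MeasurableSet[natFilt t] {ω | nStop H T ω = i} := by
  have hset : {ω : PathSpace | nStop H T ω = i} =
      {ω | H.τ i ω < T}ᶜ ∩ ⋂ (l : ℕ) (_ : l < i), {ω | H.τ l ω < T} := by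
    ext ω
    simp only [Set.mem_inter_iff, Set.mem_compl_iff, Set.mem_setOf_eq, Set.mem_iInter, not_lt]
    rw [nStop, Nat.find_eq_iff]
    constructor
    · rintro ⟨h1, h2⟩; exact ⟨h1, fun l hl => not_le.mp (h2 l hl)⟩
    · rintro ⟨h1, h2⟩; exact ⟨h1, fun l hl => not_le.mpr (h2 l hl)⟩
  rw [hset]
  exact ((measurableSet_tau_lt H i hT).compl).inter
    (MeasurableSet.iInter fun l => MeasurableSet.iInter fun _ => measurableSet_tau_lt H l hT)

/-- The strategy `H` stopped at the deterministic time `T > 0`. -/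
def stopAt (H : SimpleStrategy) (T : ℝ) (hT : 0 < T) : SimpleStrategy where
  τ := tauStop H T
  F := FStop H T
  tau_zero := fun ω => by
    have h0 : H.τ 0 ω < T := by rw [H.tau_zero ω]; exact hT
    rw [tauStop_eq_of_lt h0, H.tau_zero ω]
  tau_lt := fun j ω => by
    by_cases h1 : H.τ (j+1) ω < T
    · have h2 : H.τ j ω < T := (H.tau_lt j ω).trans h1
      rw [tauStop_eq_of_lt h1, tauStop_eq_of_lt h2]
      exact H.tau_lt j ω
    · push_neg at h1
      by_cases h2 : H.τ j ω < T
      · rw [tauStop_eq_of_lt h2]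
        exact lt_of_lt_of_le h2 (le_tauStop_of_ge h1)
      · push_neg at h2
        rw [tauStop_eq_of_ge h1, tauStop_eq_of_ge h2]
        have hn : nStop H T ω ≤ j := nStop_le_iff.mpr h2
        have hlt : (j - nStop H T ω : ℕ) < (j + 1 - nStop H T ω : ℕ) := by omega
        have hlt' : ((j - nStop H T ω : ℕ) : ℝ) < ((j + 1 - nStop H T ω : ℕ) : ℝ) := by
          exact_mod_cast hlt
        linarith
  tau_tendsto := fun ω => by
    have hev : ∀ᶠ j in atTop,
        (fun j => T + ((j - nStop H T ω : ℕ) : ℝ)) j = tauStop H T j ω := by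
      filter_upwards [eventually_ge_atTop (nStop H T ω)] with j hj
      exact (tauStop_eq_of_ge (nStop_le_iff.mp hj)).symm
    refine Tendsto.congr' hev ?_
    exact tendsto_atTop_add_const_left _ T
      (tendsto_natCast_atTop_atTop.comp (tendsto_sub_atTop_nat _))
  tau_stopping := fun j t => by
    by_cases ht : T ≤ t
    · have hset : {ω | tauStop H T j ω ≤ t} =
          {ω | H.τ j ω < T} ∪ ⋃ i : ℕ, ({ω | nStop H T ω = i} ∩ {ω | H.τ j ω < T}ᶜ ∩
            (if T + ((j - i : ℕ) : ℝ) ≤ t then (Set.univ : Set PathSpace) else ∅)) := by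
        ext ω
        simp only [Set.mem_setOf_eq, Set.mem_union, Set.mem_iUnion, Set.mem_inter_iff,
          Set.mem_compl_iff]
        by_cases h : H.τ j ω < T
        · rw [tauStop_eq_of_lt h]
          exact iff_of_true (h.le.trans ht) (Or.inl h)
        · push_neg at h
          rw [tauStop_eq_of_ge h]
          constructor
          · intro hle
            refine Or.inr ⟨nStop H T ω, ⟨rfl, not_lt.mpr h⟩, ?_⟩
            rw [if_pos hle]
            trivial
          · rintro (hc | ⟨i, ⟨hi, -⟩, hmem⟩)
            · exact absurd hc (not_lt.mpr h)
            · subst hi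
              by_cases hif : T + ((j - nStop H T ω : ℕ) : ℝ) ≤ t
              · exact hif
              · rw [if_neg hif] at hmem
                exact absurd hmem (Set.notMem_empty ω)
      rw [hset]
      refine (measurableSet_tau_lt H j ht).union (MeasurableSet.iUnion fun i => ?_)
      refine ((measurableSet_nStop_eq H ht i).inter (measurableSet_tau_lt H j ht).compl).inter ?_
      split_ifs
      · exact @MeasurableSet.univ PathSpace (natFilt t)
      · exact @MeasurableSet.empty PathSpace (natFilt t)
    · push_neg at ht
      have hset : {ω | tauStop H T j ω ≤ t} = {ω | H.τ j ω ≤ t} := by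
        ext ω
        simp only [Set.mem_setOf_eq]
        by_cases h : H.τ j ω < T
        · rw [tauStop_eq_of_lt h]
        · push_neg at h
          constructor
          · intro hle
            have h2 := le_tauStop_of_ge h
            linarith
          · intro hle; linarith
      rw [hset]
      exact H.tau_stopping j t
  F_meas := fun j => by
    intro B hB
    obtain ⟨C, hC, hCeq⟩ := MeasurableSpace.measurableSet_comap.mp (H.F_meas j hB)
    have hDmeas : MeasurableSet {p : PathSpace | H.τ j p < T} :=
      measurableSet_of_natFilt (measurableSet_tau_lt H j (le_refl T))
    refine MeasurableSpace.measurableSet_comap.mpr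
      ⟨(C ∩ {p : PathSpace | H.τ j p < T}) ∪
        (if (0:ℝ) ∈ B then {p : PathSpace | H.τ j p < T}ᶜ else ∅), ?_, ?_⟩
    · refine (hC.inter hDmeas).union ?_
      split_ifs
      · exact hDmeas.compl
      · exact MeasurableSet.empty
    · ext ω
      simp only [Set.mem_preimage, Set.mem_union, Set.mem_inter_iff, Set.mem_compl_iff,
        Set.mem_setOf_eq]
      by_cases h : H.τ j ω < T
      · have hSS : stoppedPath ω (tauStop H T j ω) = stoppedPath ω (H.τ j ω) := by
          rw [tauStop_eq_of_lt h]
        have hagree : ∀ s ≤ H.τ j ω, ω.1 s = (stoppedPath ω (H.τ j ω)).1 s := by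
          intro s hs
          show ω.1 s = ω.1 (min s (H.τ j ω))
          rw [min_eq_left hs]
        have hmemω : ω ∈ {ω' : PathSpace | H.τ j ω' ≤ H.τ j ω} := by
          simp only [Set.mem_setOf_eq]
          exact le_rfl
        have hτS : H.τ j (stoppedPath ω (H.τ j ω)) ≤ H.τ j ω :=
          (natFilt_invariant (H.tau_stopping j (H.τ j ω)) hagree).mp hmemω
        have hSD : H.τ j (stoppedPath ω (H.τ j ω)) < T := lt_of_le_of_lt hτS h
        have hSC : stoppedPath ω (H.τ j ω) ∈ C ↔ H.F j ω ∈ B := by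
          have h5 := Set.ext_iff.mp hCeq ω
          exact h5
        rw [hSS, FStop_of_lt h]
        constructor
        · rintro (⟨hc, -⟩ | hmem)
          · exact hSC.mp hc
          · exfalso
            split_ifs at hmem with h0
            · exact hmem hSD
            · exact hmem
        · intro hb
          exact Or.inl ⟨hSC.mpr hb, hSD⟩
      · push_neg at h
        have hT' : T ≤ tauStop H T j ω := le_tauStop_of_ge h
        have hagree : ∀ s ≤ tauStop H T j ω, ω.1 s = (stoppedPath ω (tauStop H T j ω)).1 s := by
          intro s hs
          show ω.1 s = ω.1 (min s (tauStop H T j ω))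
          rw [min_eq_left hs]
        have hSD : ¬ H.τ j (stoppedPath ω (tauStop H T j ω)) < T := by
          intro hd
          obtain ⟨m, hm⟩ := exists_nat_one_div_lt (sub_pos.mpr hd)
          have hpos : (0:ℝ) < 1 / ((m : ℝ) + 1) := by positivity
          have hnat : MeasurableSet[natFilt (tauStop H T j ω)]
              {p : PathSpace | H.τ j p ≤ T - 1 / ((m : ℝ) + 1)} :=
            natFilt_mono (by linarith) _ (H.tau_stopping j _)
          have hmem : stoppedPath ω (tauStop H T j ω) ∈
              {p : PathSpace | H.τ j p ≤ T - 1 / ((m : ℝ) + 1)} := by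
            show H.τ j (stoppedPath ω (tauStop H T j ω)) ≤ T - 1 / ((m : ℝ) + 1)
            linarith
          have h6 : H.τ j ω ≤ T - 1 / ((m : ℝ) + 1) :=
            (natFilt_invariant hnat hagree).mpr hmem
          linarith
        rw [FStop_of_ge h]
        constructor
        · rintro (⟨-, hd⟩ | hmem)
          · exact absurd hd hSD
          · split_ifs at hmem with h0
            · exact h0
            · exact absurd hmem (Set.notMem_empty _)
        · intro hb
          refine Or.inr ?_
          rw [if_pos hb]
          exact hSD
  F_bdd := fun j => by
    obtain ⟨C, hC⟩ := H.F_bdd j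
    refine ⟨C, fun ω => ?_⟩
    by_cases h : H.τ j ω < T
    · rw [FStop_of_lt h]; exact hC ω
    · push_neg at h
      rw [FStop_of_ge h, abs_zero]
      exact (abs_nonneg _).trans (hC ω)

/-- The strategy `H` with all positions scaled by `c`. -/
def scaleStrat (c : ℝ) (H : SimpleStrategy) : SimpleStrategy where
  τ := H.τ
  F := fun n ω => c * H.F n ω
  tau_zero := H.tau_zero
  tau_lt := H.tau_lt
  tau_tendsto := H.tau_tendsto
  tau_stopping := H.tau_stopping
  F_meas := fun n => (H.F_meas n).const_mul c
  F_bdd := fun n => by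
    obtain ⟨C, hC⟩ := H.F_bdd n
    refine ⟨|c| * C, fun ω => ?_⟩
    rw [abs_mul]
    exact mul_le_mul_of_nonneg_left (hC ω) (abs_nonneg c)

lemma capital_scale (c : ℝ) (H : SimpleStrategy) (t : ℝ) (ω : PathSpace) :
    capital (scaleStrat c H) t ω = c * capital H t ω := by
  rw [capital, capital, ← tsum_mul_left]
  exact tsum_congr fun n => mul_assoc _ _ _

lemma capital_stopAt (H : SimpleStrategy) (T : ℝ) (hT : 0 < T) (t : ℝ) (ω : PathSpace) :
    capital (stopAt H T hT) t ω = capital H (min t T) ω := by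
  rw [capital, capital]
  refine tsum_congr fun j => ?_
  show FStop H T j ω * (ω.1 (min (tauStop H T (j+1) ω) t) - ω.1 (min (tauStop H T j ω) t)) = _
  by_cases h2 : H.τ j ω < T
  · have hminj : min (H.τ j ω) (min t T) = min (H.τ j ω) t := by
      rw [min_comm t T, ← min_assoc, min_eq_left h2.le]
    by_cases h1 : H.τ (j+1) ω < T
    · have hminj1 : min (H.τ (j+1) ω) (min t T) = min (H.τ (j+1) ω) t := by
        rw [min_comm t T, ← min_assoc, min_eq_left h1.le]
      rw [FStop_of_lt h2, tauStop_eq_of_lt h2, tauStop_eq_of_lt h1, hminj, hminj1]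
    · push_neg at h1
      have hminj1 : min (H.τ (j+1) ω) (min t T) = min T t := by
        rw [min_eq_right ((min_le_right t T).trans h1), min_comm]
      rw [FStop_of_lt h2, tauStop_eq_of_lt h2, tauStop_succ_eq_T h2 h1, hminj, hminj1]
  · push_neg at h2
    have h1 : T ≤ H.τ (j+1) ω := h2.trans (H.tau_lt j ω).le
    rw [FStop_of_ge h2, zero_mul, min_eq_right ((min_le_right t T).trans h1),
      min_eq_right ((min_le_right t T).trans h2), sub_self, mul_zero]

/-- **Null sets are polar for `(NA1)` measures**: if `P̄(A) = 0` and the coordinate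
process satisfies `(NA1)` under the probability measure `P`, then `P(A) = 0`. -/
theorem null_polar_NA1 (A : Set PathSpace) (hA : A ⊆ OmegaQV) (hmeas : MeasurableSet A)
    (hnull : Pbar A = 0) (P : Measure PathSpace) (hP : IsProbabilityMeasure P)
    (hqv : P OmegaQV = 1) (hNA1 : SatisfiesNA1 P) :
    P A = 0 := by
  have key : ∀ n : ℕ, P A ≤
      ⨆ H : {H : SimpleStrategy //
          ∀ (ω : PathSpace) (t : ℝ), ω ∈ OmegaQV → 0 ≤ t → -1 ≤ capital H t ω},
        P {ω | (n : EReal) ≤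
            1 + liminf (fun t : ℝ => ((capital H.1 t ω : ℝ) : EReal)) atTop} := by
    intro n
    have hpos : (0:ℝ) < 1 / (4 * (n:ℝ) + 4) := by positivity
    have h1 : Pbar A < ENNReal.ofReal (1 / (4 * (n:ℝ) + 4)) := by
      rw [hnull]; exact ENNReal.ofReal_pos.mpr hpos
    unfold Pbar Ebar at h1
    obtain ⟨l, hlS, hllt⟩ := sInf_lt_iff.mp h1
    obtain ⟨lam, hlam0, rfl, H, hadm, hsup⟩ := hlS
    have hlam4 : lam < 1 / (4 * (n:ℝ) + 4) := by
      rwa [ENNReal.ofReal_lt_ofReal_iff hpos] at hllt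
    have hlaminv : (0:ℝ) < 1 / lam := by positivity
    -- the approximating families of sets
    set Fs : ℕ → ℕ → Set PathSpace := fun M K =>
      {ω | ∀ k, K ≤ k → (1/4 : ℝ) < lam + capital (H k) ((M:ℝ) + 1) ω} with hFs
    set Es : ℕ → Set PathSpace := fun M =>
      {ω | ∀ m : ℕ, M ≤ m →
        ∀ᶠ k in atTop,
          ((1/4 : ℝ) : EReal) < ((lam + capital (H k) ((m:ℝ) + 1) ω : ℝ) : EReal)} with hEs
    have hAE : A ⊆ ⋃ M, Es M := by
      intro ω hω
      have hQV : ω ∈ OmegaQV := hA hω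
      have hs := hsup ω hQV
      rw [Set.indicator_of_mem hω] at hs
      have hhalf : ((1/2 : ℝ) : EReal) < (1 : EReal) := by
        rw [show (1 : EReal) = ((1:ℝ) : EReal) from (EReal.coe_one).symm]
        exact EReal.coe_lt_coe_iff.mpr (by norm_num)
      have h12 : ((1/2 : ℝ) : EReal) <
          liminf (fun t : ℝ => liminf
            (fun k : ℕ => ((lam + capital (H k) t ω : ℝ) : EReal)) atTop) atTop :=
        lt_of_lt_of_le hhalf hs
      have h2 := Filter.eventually_lt_of_lt_liminf h12
      obtain ⟨T₀, hT₀⟩ := eventually_atTop.mp h2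
      refine Set.mem_iUnion.mpr ⟨⌈T₀⌉₊, ?_⟩
      intro m hm
      have hTm : T₀ ≤ (m:ℝ) + 1 := by
        calc T₀ ≤ (⌈T₀⌉₊ : ℝ) := Nat.le_ceil T₀
          _ ≤ (m:ℝ) := by exact_mod_cast hm
          _ ≤ (m:ℝ) + 1 := by linarith
      have h3 := hT₀ ((m:ℝ) + 1) hTm
      have h4 : ((1/4 : ℝ) : EReal) < ((1/2 : ℝ) : EReal) :=
        EReal.coe_lt_coe_iff.mpr (by norm_num)
      exact Filter.eventually_lt_of_lt_liminf (lt_trans h4 h3)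
    have hEF : ∀ M, Es M ⊆ ⋃ K, Fs M K := by
      intro M ω hω
      obtain ⟨K, hK⟩ := eventually_atTop.mp (hω M le_rfl)
      exact Set.mem_iUnion.mpr ⟨K, fun k hk => EReal.coe_lt_coe_iff.mp (hK k hk)⟩
    have hbound : ∀ M K : ℕ, P (Fs M K) ≤
        ⨆ H' : {H' : SimpleStrategy //
            ∀ (ω : PathSpace) (t : ℝ), ω ∈ OmegaQV → 0 ≤ t → -1 ≤ capital H' t ω},
          P {ω | (n : EReal) ≤
              1 + liminf (fun t : ℝ => ((capital H'.1 t ω : ℝ) : EReal)) atTop} := by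
      intro M K
      have hTpos : (0:ℝ) < (M:ℝ) + 1 := by positivity
      set J : SimpleStrategy := scaleStrat (1/lam) (stopAt (H K) ((M:ℝ) + 1) hTpos) with hJ
      have hcapJ : ∀ (t : ℝ) (ω' : PathSpace),
          capital J t ω' = (1/lam) * capital (H K) (min t ((M:ℝ) + 1)) ω' := by
        intro t ω'
        rw [hJ, capital_scale, capital_stopAt]
      have hJadm : ∀ (ω' : PathSpace) (t : ℝ), ω' ∈ OmegaQV → 0 ≤ t → -1 ≤ capital J t ω' := by
        intro ω' t hω' ht
        rw [hcapJ]
        have hc := hadm K ω' (min t ((M:ℝ) + 1)) hω' (le_min ht hTpos.le)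
        have h5 : (1/lam) * (-lam) ≤ (1/lam) * capital (H K) (min t ((M:ℝ) + 1)) ω' :=
          mul_le_mul_of_nonneg_left hc hlaminv.le
        have h6 : (1/lam) * (-lam) = -1 := by field_simp
        linarith
      have hsub : Fs M K ⊆ {ω | (n : EReal) ≤
          1 + liminf (fun t : ℝ => ((capital J t ω : ℝ) : EReal)) atTop} := by
        intro ω hω
        have hcap : (1/4 : ℝ) < lam + capital (H K) ((M:ℝ) + 1) ω := hω K le_rfl
        have hlim : liminf (fun t : ℝ => ((capital J t ω : ℝ) : EReal)) atTop =
            (((1/lam) * capital (H K) ((M:ℝ) + 1) ω : ℝ) : EReal) := by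
          have hev : ∀ᶠ t : ℝ in atTop, ((capital J t ω : ℝ) : EReal) =
              (((1/lam) * capital (H K) ((M:ℝ) + 1) ω : ℝ) : EReal) := by
            filter_upwards [eventually_ge_atTop ((M:ℝ) + 1)] with t ht
            rw [hcapJ, min_eq_right ht]
          rw [Filter.liminf_congr hev, Filter.liminf_const]
        show (n : EReal) ≤ _
        rw [hlim]
        have hx : (n:ℝ) ≤ 1 + (1/lam) * capital (H K) ((M:ℝ) + 1) ω := by
          set c := capital (H K) ((M:ℝ) + 1) ω with hc'
          set u := 1/lam with hu'
          have hu : u * lam = 1 := by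
            rw [hu']; field_simp
          have hupos : 0 < u := hlaminv
          have hA' : lam * (4 * (n:ℝ) + 4) < 1 := by
            have h9 : (0:ℝ) < 4 * (n:ℝ) + 4 := by positivity
            exact (lt_div_iff₀ h9).mp hlam4
          have h10 : 4 * (n:ℝ) + 4 < u := by
            have h11 := mul_lt_mul_of_pos_left hA' hupos
            calc 4 * (n:ℝ) + 4 = (u * lam) * (4 * (n:ℝ) + 4) := by rw [hu]; ring
              _ = u * (lam * (4 * (n:ℝ) + 4)) := by ring
              _ < u * 1 := h11
              _ = u := mul_one u
          have h7 : 1/4 - lam ≤ c := by linarith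
          have h8 : u * (1/4 - lam) ≤ u * c := mul_le_mul_of_nonneg_left h7 hupos.le
          have h12 : u * (1/4 - lam) = u/4 - 1 := by
            rw [mul_sub, hu]; ring
          linarith
        calc (n : EReal) = (((n:ℝ)) : EReal) := by norm_cast
          _ ≤ ((1 + (1/lam) * capital (H K) ((M:ℝ) + 1) ω : ℝ) : EReal) :=
              EReal.coe_le_coe_iff.mpr hx
          _ = 1 + (((1/lam) * capital (H K) ((M:ℝ) + 1) ω : ℝ) : EReal) := by
              rw [EReal.coe_add, EReal.coe_one]
      calc P (Fs M K) ≤ P {ω | (n : EReal) ≤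
            1 + liminf (fun t : ℝ => ((capital J t ω : ℝ) : EReal)) atTop} :=
          measure_mono hsub
        _ ≤ _ := le_iSup (fun H' : {H' : SimpleStrategy //
            ∀ (ω : PathSpace) (t : ℝ), ω ∈ OmegaQV → 0 ≤ t → -1 ≤ capital H' t ω} =>
            P {ω | (n : EReal) ≤
              1 + liminf (fun t : ℝ => ((capital H'.1 t ω : ℝ) : EReal)) atTop})
            ⟨J, hJadm⟩
    have hdirE : Directed (· ⊆ ·) Es := by
      refine Monotone.directed_le ?_
      intro M M' hMM' ω hω m hm
      exact hω m (hMM'.trans hm)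
    have hdirF : ∀ M, Directed (· ⊆ ·) (Fs M) := by
      intro M
      refine Monotone.directed_le ?_
      intro K K' hKK' ω hω k hk
      exact hω k (hKK'.trans hk)
    calc P A ≤ P (⋃ M, Es M) := measure_mono hAE
      _ = ⨆ M, P (Es M) := hdirE.measure_iUnion
      _ ≤ ⨆ M, P (⋃ K, Fs M K) := iSup_mono fun M => measure_mono (hEF M)
      _ = ⨆ M, ⨆ K, P (Fs M K) := iSup_congr fun M => (hdirF M).measure_iUnion
      _ ≤ _ := by
          refine iSup_le fun M => iSup_le fun K => hbound M K
  have h0 : P A ≤ 0 := ge_of_tendsto hNA1 (Filter.Eventually.of_forall key)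
  exact le_antisymm h0 zero_le


end RF
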